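/- There exist functions $\Phi \in C^\infty_b(\mathbb{R})$ (smooth, bounded with all derivatives bounded) and $\phi \in C_0^\infty(\mathbb{R})$ (smooth, compactly supported) such that $\phi(0) = 1$, $\phi \geq 0$, and $\phi^2 = (\Phi^2)'$. -/

import Mathlib

/-! Take for `φ` a smooth bump equal to `1` near `0`. The primitive `G x = ∫_{-∞}^x φ²` of `φ²`
is smooth, nonnegative and bounded, so `Φ = √(1 + G)` is smooth (as `1 + G ≥ 1`) and bounded,
and `Φ' = φ² / (2Φ)` has compact support; hence every derivative of `Φ` is bounded, while
`Φ² = 1 + G` has derivative `φ²`. -/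

open MeasureTheory Set
open scoped ContDiff

section IteratedDeriv

variable {F : Type*} [NormedAddCommGroup F] [NormedSpace ℝ F] {f : ℝ → F}

theorem HasCompactSupport.iteratedDeriv (hf : HasCompactSupport f) (n : ℕ) :
    HasCompactSupport (iteratedDeriv n f) := by
  induction n with
  | zero => simpa using hf
  | succ n ih => simpa only [iteratedDeriv_succ] using ih.deriv

theorem exists_bound_iteratedDeriv_of_hasCompactSupport_deriv (hf : ContDiff ℝ ∞ f)
    (hf_bdd : ∃ C, ∀ x, ‖f x‖ ≤ C) (hf' : HasCompactSupport (deriv f)) (n : ℕ) :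
    ∃ C, ∀ x, ‖iteratedDeriv n f x‖ ≤ C := by
  cases n with
  | zero => simpa using hf_bdd
  | succ n =>
    have hcont : Continuous (iteratedDeriv (n + 1) f) :=
      hf.continuous_iteratedDeriv _ (by exact_mod_cast le_top)
    rw [iteratedDeriv_succ'] at hcont ⊢
    exact (hf'.iteratedDeriv n).exists_bound_of_continuous hcont

end IteratedDeriv

section Primitive

variable {E : Type*} [NormedAddCommGroup E] [NormedSpace ℝ E]

noncomputable def primitiveIic (g : ℝ → E) (x : ℝ) : E := ∫ t in Iic x, g t

variable [CompleteSpace E] {g : ℝ → E}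

theorem hasDerivAt_primitiveIic (hg : Continuous g) (hgi : Integrable g) (x : ℝ) :
    HasDerivAt (primitiveIic g) (g x) x := by
  have hsplit : primitiveIic g = fun y => primitiveIic g x + ∫ t in x..y, g t := by
    funext y
    rw [← intervalIntegral.integral_Iic_sub_Iic hgi.integrableOn hgi.integrableOn, primitiveIic,
      primitiveIic, add_sub_cancel]
  rw [hsplit]
  exact (intervalIntegral.integral_hasDerivAt_right (hg.intervalIntegrable _ _)
    (hg.stronglyMeasurableAtFilter _ _) hg.continuousAt).const_add _

theorem deriv_primitiveIic (hg : Continuous g) (hgi : Integrable g) :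
    deriv (primitiveIic g) = g :=
  funext fun x => (hasDerivAt_primitiveIic hg hgi x).deriv

theorem contDiff_primitiveIic (hg : ContDiff ℝ ∞ g) (hgi : Integrable g) :
    ContDiff ℝ ∞ (primitiveIic g) :=
  contDiff_infty_iff_deriv.2
    ⟨fun x => (hasDerivAt_primitiveIic hg.continuous hgi x).differentiableAt,
      by rwa [deriv_primitiveIic hg.continuous hgi]⟩

end Primitive

section SqrtOneAddPrimitive

variable {g : ℝ → ℝ}

theorem primitiveIic_nonneg (hg0 : 0 ≤ g) (x : ℝ) : 0 ≤ primitiveIic g x :=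
  setIntegral_nonneg measurableSet_Iic fun t _ => hg0 t

theorem primitiveIic_le_integral (hgi : Integrable g) (hg0 : 0 ≤ g) (x : ℝ) :
    primitiveIic g x ≤ ∫ t, g t :=
  setIntegral_le_integral hgi (Filter.Eventually.of_forall hg0)

theorem one_add_primitiveIic_pos (hg0 : 0 ≤ g) (x : ℝ) : 0 < 1 + primitiveIic g x := by
  linarith [primitiveIic_nonneg hg0 x]

theorem contDiff_sqrt_one_add_primitiveIic (hg : ContDiff ℝ ∞ g) (hgi : Integrable g)
    (hg0 : 0 ≤ g) : ContDiff ℝ ∞ fun x => √(1 + primitiveIic g x) :=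
  (contDiff_const.add (contDiff_primitiveIic hg hgi)).sqrt
    fun x => (one_add_primitiveIic_pos hg0 x).ne'

theorem norm_sqrt_one_add_primitiveIic_le (hgi : Integrable g) (hg0 : 0 ≤ g) (x : ℝ) :
    ‖√(1 + primitiveIic g x)‖ ≤ √(1 + ∫ t, g t) := by
  rw [Real.norm_of_nonneg (Real.sqrt_nonneg _)]
  exact Real.sqrt_le_sqrt (by linarith [primitiveIic_le_integral hgi hg0 x])

theorem deriv_sq_sqrt_one_add_primitiveIic (hg : Continuous g) (hgi : Integrable g)
    (hg0 : 0 ≤ g) (x : ℝ) : deriv (fun y => √(1 + primitiveIic g y) ^ 2) x = g x := by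
  simp_rw [Real.sq_sqrt (one_add_primitiveIic_pos hg0 _).le]
  rw [deriv_const_add, deriv_primitiveIic hg hgi]

theorem hasCompactSupport_deriv_sqrt_one_add_primitiveIic (hg : Continuous g)
    (hgs : HasCompactSupport g) (hg0 : 0 ≤ g) :
    HasCompactSupport (deriv fun x => √(1 + primitiveIic g x)) := by
  have hgi : Integrable g := hg.integrable_of_hasCompactSupport hgs
  refine hgs.mono fun x hx hgx => hx ?_
  rw [(((hasDerivAt_primitiveIic hg hgi x).const_add 1).sqrt
    (one_add_primitiveIic_pos hg0 x).ne').deriv, hgx, zero_div]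

end SqrtOneAddPrimitive

theorem exists_contDiff_bounded_deriv_sq_eq {g : ℝ → ℝ} (hg : ContDiff ℝ ∞ g)
    (hgs : HasCompactSupport g) (hg0 : 0 ≤ g) :
    ∃ Φ : ℝ → ℝ, ContDiff ℝ ∞ Φ ∧ (∀ n : ℕ, ∃ C, ∀ x, |iteratedDeriv n Φ x| ≤ C) ∧
      ∀ x, g x = deriv (fun y => Φ y ^ 2) x := by
  have hgi : Integrable g := hg.continuous.integrable_of_hasCompactSupport hgs
  have hΦ := contDiff_sqrt_one_add_primitiveIic hg hgi hg0
  refine ⟨_, hΦ, fun n => ?_,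
    fun x => (deriv_sq_sqrt_one_add_primitiveIic hg.continuous hgi hg0 x).symm⟩
  simpa only [Real.norm_eq_abs] using
    exists_bound_iteratedDeriv_of_hasCompactSupport_deriv hΦ
      ⟨_, norm_sqrt_one_add_primitiveIic_le hgi hg0⟩
      (hasCompactSupport_deriv_sqrt_one_add_primitiveIic hg.continuous hgs hg0) n

/-- There exist `Φ ∈ C^∞_b(ℝ)` (smooth with all derivatives bounded) and
`φ ∈ C_0^∞(ℝ)` (smooth, compactly supported) with `φ(0) = 1`, `φ ≥ 0`, and
`φ² = (Φ²)'`. -/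
theorem exists_phi_sq_eq_deriv_sq :
    ∃ Φ φ : ℝ → ℝ,
      ContDiff ℝ (⊤ : ℕ∞) Φ ∧
      (∀ n : ℕ, ∃ C : ℝ, ∀ x : ℝ, |iteratedDeriv n Φ x| ≤ C) ∧
      ContDiff ℝ (⊤ : ℕ∞) φ ∧ HasCompactSupport φ ∧
      φ 0 = 1 ∧ (∀ x, 0 ≤ φ x) ∧
      ∀ x, (φ x) ^ 2 = deriv (fun y => (Φ y) ^ 2) x := by
  let φ : ContDiffBump (0 : ℝ) := ⟨1, 2, one_pos, one_lt_two⟩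
  obtain ⟨Φ, hΦ, hΦ_bdd, hΦ_deriv⟩ :=
    exists_contDiff_bounded_deriv_sq_eq (g := fun x => φ x ^ 2) (φ.contDiff.pow 2)
      φ.hasCompactSupport.mul_left fun x => sq_nonneg _
  exact ⟨Φ, φ, hΦ, hΦ_bdd, φ.contDiff, φ.hasCompactSupport,
    φ.one_of_mem_closedBall (by simp [φ]), φ.nonneg', hΦ_deriv⟩
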